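/- Claim (Dirichlet form comparison under a quasi-isometry): Let Φ : Γ → Γ̂ be a quasi-isometry with constants ε, a, b, C_q between connected weighted graphs with controlled and uniformly lazy weights. Then there exists a constant C_A, depending only on ε and the quasi-isometry and weight constants, such that for every finitely supported function f : Γ̂ → ℝ: (1/2)∑_{α,β ∈ Γ} |f_ε(Φ(α)) − f_ε(Φ(β))|² μ_{αβ} ≤ C_A · (1/2)∑_{x,y ∈ Γ̂} |f(x) − f(y)|² μ̂_{xy}. -/
import Mathlib


open scoped BigOperators

/-- Sum of a real-valued function over a set of vertices. -/
noncomputable def setSum {V : Type*} (A : Set V) (f : V → ℝ) : ℝ := ∑' y : A, f (y : V)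

open Classical in
/-- The Markov kernel attached to vertex weights `pw` and edge weights `ew`. -/
noncomputable def mkernel {V : Type*} (pw : V → ℝ) (ew : V → V → ℝ) (x y : V) : ℝ :=
  if x = y then 1 - (∑' z, ew x z) / pw x else ew x y / pw x

open Classical in
/-- Iterates (convolution powers) of the Markov kernel. -/
noncomputable def mkernelPow {V : Type*} (pw : V → ℝ) (ew : V → V → ℝ) : ℕ → V → V → ℝ
  | 0 => fun x y => if x = y then 1 else 0
  | n + 1 => fun x y => ∑' z, mkernel pw ew x z * mkernelPow pw ew n z y

/-- The heat kernel (transition density) of the random walk. -/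
noncomputable def mheat {V : Type*} (pw : V → ℝ) (ew : V → V → ℝ) (n : ℕ) (x y : V) : ℝ :=
  mkernelPow pw ew n x y / pw y

/-- A weighted graph: a simple connected graph with symmetric, adapted edge weights
subordinate to positive vertex weights. -/
structure WeightedGraph (V : Type*) where
  G : SimpleGraph V
  wV : V → ℝ
  wE : V → V → ℝ
  wV_pos : ∀ x, 0 < wV x
  wE_nonneg : ∀ x y, 0 ≤ wE x y
  wE_symm : ∀ x y, wE x y = wE y x
  adapted : ∀ x y, 0 < wE x y ↔ G.Adj x y
  connected : G.Connected
  wE_summable : ∀ x, Summable fun y => wE x y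
  subordinate : ∀ x, (∑' y, wE x y) ≤ wV x

namespace WeightedGraph

variable {V : Type*}

/-- Controlled weights with constant `Cc`. -/
def Controlled (Γ : WeightedGraph V) (Cc : ℝ) : Prop :=
  1 < Cc ∧ ∀ x y, Γ.G.Adj x y → Γ.wV x ≤ Cc * Γ.wE x y

/-- Uniformly lazy weights with constant `Ce`. -/
def UniformlyLazy (Γ : WeightedGraph V) (Ce : ℝ) : Prop :=
  Ce ∈ Set.Ioo (0 : ℝ) 1 ∧ ∀ x, (∑' y, Γ.wE x y) ≤ (1 - Ce) * Γ.wV x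

/-- Closed ball for the graph distance. -/
noncomputable def ball (Γ : WeightedGraph V) (x : V) (r : ℝ) : Set V :=
  {y | (Γ.G.dist x y : ℝ) ≤ r}

/-- Volume of a ball. -/
noncomputable def vol (Γ : WeightedGraph V) (x : V) (r : ℝ) : ℝ :=
  setSum (Γ.ball x r) Γ.wV

/-- Dirichlet energy of a function. -/
noncomputable def energy (Γ : WeightedGraph V) (f : V → ℝ) : ℝ :=
  (∑' x, ∑' y, (f x - f y) ^ 2 * Γ.wE x y) / 2

/-- Squared `L²`-norm of a function. -/
noncomputable def sqnorm (Γ : WeightedGraph V) (f : V → ℝ) : ℝ :=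
  ∑' x, f x ^ 2 * Γ.wV x

/-- The first Dirichlet eigenvalue of a finite set `Ω`. -/
noncomputable def lambda1 (Γ : WeightedGraph V) (Ω : Finset V) : ℝ :=
  sInf {q | ∃ f : V → ℝ, f ≠ 0 ∧ (∀ x, f x ≠ 0 → x ∈ Ω) ∧ q = Γ.energy f / Γ.sqnorm f}

/-- `Λ` is a relative Faber-Krahn function of `Γ`: for balls `B(z,r)` the map
`ν ↦ Λ z r ν` is non-increasing, and `λ₁(Ω) ≥ Λ(B, π(Ω))` for nonempty finite `Ω ⊆ B`. -/
def IsRelFK (Γ : WeightedGraph V) (Λ : V → ℝ → ℝ → ℝ) : Prop :=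
  (∀ z r ν₁ ν₂, 0 < ν₁ → ν₁ ≤ ν₂ → Λ z r ν₂ ≤ Λ z r ν₁) ∧
  ∀ z : V, ∀ r : ℝ, ∀ Ω : Finset V, Ω.Nonempty → (∀ x ∈ Ω, x ∈ Γ.ball z r) →
    Λ z r (∑ x ∈ Ω, Γ.wV x) ≤ Γ.lambda1 Ω

/-- The heat kernel of the weighted graph. -/
noncomputable def heatKernel (Γ : WeightedGraph V) : ℕ → V → V → ℝ :=
  mheat Γ.wV Γ.wE

/-- `ε`-average of a function over closed balls of radius `ε`. -/
noncomputable def avg (Γ : WeightedGraph V) (ε : ℝ) (f : V → ℝ) (x : V) : ℝ :=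
  setSum (Γ.ball x ε) (fun y => f y * Γ.wV y) / Γ.vol x ε

/-- `Φ` is a quasi-isometry between weighted graphs with constants `ε, a, b, Cq`. -/
structure IsQI {V₁ V₂ : Type*} (Γ₁ : WeightedGraph V₁) (Γ₂ : WeightedGraph V₂)
    (Φ : V₁ → V₂) (ε a b Cq : ℝ) : Prop where
  eps_pos : 0 < ε
  a_pos : 0 < a
  b_nonneg : 0 ≤ b
  Cq_pos : 0 < Cq
  dense : ∀ z : V₂, ∃ x : V₁, (Γ₂.G.dist (Φ x) z : ℝ) ≤ ε
  dist_lower : ∀ x y : V₁, a⁻¹ * (Γ₁.G.dist x y : ℝ) - b ≤ (Γ₂.G.dist (Φ x) (Φ y) : ℝ)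
  dist_upper : ∀ x y : V₁, (Γ₂.G.dist (Φ x) (Φ y) : ℝ) ≤ a * (Γ₁.G.dist x y : ℝ)
  weight_lower : ∀ x, Cq⁻¹ * Γ₁.wV x ≤ Γ₂.wV (Φ x)
  weight_upper : ∀ x, Γ₂.wV (Φ x) ≤ Cq * Γ₁.wV x

end WeightedGraph

namespace WeightedGraph

variable {V : Type*} (Γ : WeightedGraph V)

lemma wE_le_wV (x y : V) : Γ.wE x y ≤ Γ.wV x :=
  le_trans (Summable.le_tsum (Γ.wE_summable x) y fun _ _ => Γ.wE_nonneg x _) (Γ.subordinate x)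

lemma wE_eq_zero {x y : V} (h : ¬ Γ.G.Adj x y) : Γ.wE x y = 0 := by
  by_contra h'
  exact h ((Γ.adapted x y).1 (lt_of_le_of_ne (Γ.wE_nonneg x y) (Ne.symm h')))

lemma adj_of_wE_ne {x y : V} (h : Γ.wE x y ≠ 0) : Γ.G.Adj x y :=
  (Γ.adapted x y).1 (lt_of_le_of_ne (Γ.wE_nonneg x y) (Ne.symm h))

variable {Cc : ℝ} {Γ}

lemma setSum_finite {A : Set V} (hA : A.Finite) (h : V → ℝ) :
    setSum A h = ∑ y ∈ hA.toFinset, h y := by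
  rw [setSum, tsum_subtype, tsum_eq_sum (s := hA.toFinset)
    (fun b hb => Set.indicator_of_notMem (by simpa using hb) h)]
  exact Finset.sum_congr rfl fun y hy => Set.indicator_of_mem (by simpa using hy) h

lemma card_le_of_adj (hc : Γ.Controlled Cc) (x : V) (s : Finset V)
    (hs : ∀ y ∈ s, Γ.G.Adj x y) : (s.card : ℝ) ≤ Cc := by
  have hCc : 0 < Cc := lt_trans one_pos hc.1
  have hw := Γ.wV_pos x
  have h1 : (s.card : ℝ) * (Γ.wV x / Cc) ≤ ∑ y ∈ s, Γ.wE x y := by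
    have : ∀ y ∈ s, Γ.wV x / Cc ≤ Γ.wE x y := fun y hy =>
      (div_le_iff₀' hCc).2 (hc.2 x y (hs y hy))
    calc (s.card : ℝ) * (Γ.wV x / Cc) = ∑ _y ∈ s, Γ.wV x / Cc := by
          rw [Finset.sum_const, nsmul_eq_mul]
      _ ≤ _ := Finset.sum_le_sum this
  have h2 : ∑ y ∈ s, Γ.wE x y ≤ Γ.wV x :=
    le_trans (Summable.sum_le_tsum s (fun y _ => Γ.wE_nonneg x y) (Γ.wE_summable x)) (Γ.subordinate x)
  have h3 : (s.card : ℝ) * (Γ.wV x / Cc) ≤ Γ.wV x := h1.trans h2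
  have h4 : (s.card : ℝ) * Γ.wV x ≤ Γ.wV x * Cc := by
    have := mul_le_mul_of_nonneg_right h3 hCc.le
    rwa [mul_assoc, div_mul_cancel₀ _ hCc.ne'] at this
  nlinarith [h4, hw]

lemma nbr_finite (hc : Γ.Controlled Cc) (x : V) : {y | Γ.G.Adj x y}.Finite := by
  by_contra h
  obtain ⟨t, hts, htc⟩ := (show Set.Infinite _ from h).exists_subset_card_eq (⌈Cc⌉₊ + 1)
  have h1 := card_le_of_adj hc x t (fun y hy => hts hy)
  rw [htc] at h1
  have h2 : Cc ≤ (⌈Cc⌉₊ : ℝ) := Nat.le_ceil Cc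
  push_cast at h1
  linarith

lemma dist_getVert_le {G : SimpleGraph V} (hconn : G.Connected) {x y : V} (p : G.Walk x y) (i : ℕ) :
    G.dist x (p.getVert i) ≤ i := by
  induction i with
  | zero => simp [SimpleGraph.Walk.getVert_zero, SimpleGraph.dist_self]
  | succ n ih =>
    by_cases h : n < p.length
    · have hadj := p.adj_getVert_succ h
      have h1 : G.dist (p.getVert n) (p.getVert (n+1)) ≤ 1 := by
        simpa using SimpleGraph.dist_le (SimpleGraph.Walk.cons hadj SimpleGraph.Walk.nil)
      calc G.dist x (p.getVert (n+1)) ≤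
          G.dist x (p.getVert n) + G.dist (p.getVert n) (p.getVert (n+1)) :=
            hconn.dist_triangle
        _ ≤ n + 1 := add_le_add ih h1
    · have hlen : p.length ≤ n := le_of_not_gt h
      have h1 : p.getVert (n+1) = p.getVert n := by
        rw [p.getVert_of_length_le hlen, p.getVert_of_length_le (hlen.trans (Nat.le_succ n))]
      rw [h1]; exact ih.trans (Nat.le_succ n)

lemma ball_cover (hc : Γ.Controlled Cc) :
    ∀ (n : ℕ) (x : V), ∃ s : Finset V,
      (∀ y, Γ.G.dist x y ≤ n → y ∈ s) ∧ (s.card : ℝ) ≤ (Cc + 1) ^ n := by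
  classical
  have hCc : 0 < Cc := lt_trans one_pos hc.1
  intro n
  induction n with
  | zero =>
    intro x
    refine ⟨{x}, fun y hy => ?_, by simp⟩
    have h0 : Γ.G.dist x y = 0 := Nat.le_zero.mp hy
    have := (Γ.connected.dist_eq_zero_iff).mp h0
    simp [this]
  | succ n ih =>
    intro x
    obtain ⟨s, hs, hcard⟩ := ih x
    refine ⟨s.biUnion (fun z => insert z (nbr_finite hc z).toFinset), ?_, ?_⟩
    · intro y hy
      by_cases hyn : Γ.G.dist x y ≤ n
      · exact Finset.mem_biUnion.2 ⟨y, hs y hyn, Finset.mem_insert_self _ _⟩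
      · have hd : Γ.G.dist x y = n + 1 := le_antisymm hy (Nat.succ_le_of_lt (lt_of_not_ge hyn))
        obtain ⟨p, hp⟩ := (Γ.connected.preconnected x y).exists_walk_length_eq_dist
        have hz : Γ.G.dist x (p.getVert n) ≤ n := dist_getVert_le Γ.connected p n
        have hadj : Γ.G.Adj (p.getVert n) y := by
          have hlt : n < p.length := by omega
          have := p.adj_getVert_succ hlt
          rwa [show n + 1 = p.length by omega, p.getVert_length] at this
        refine Finset.mem_biUnion.2 ⟨p.getVert n, hs _ hz, Finset.mem_insert_of_mem ?_⟩
        simpa using hadj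
    · calc ((s.biUnion (fun z => insert z (nbr_finite hc z).toFinset)).card : ℝ)
          ≤ ((∑ z ∈ s, (insert z (nbr_finite hc z).toFinset).card : ℕ) : ℝ) := by
            exact_mod_cast Finset.card_biUnion_le
        _ = ∑ z ∈ s, ((insert z (nbr_finite hc z).toFinset).card : ℝ) := by push_cast; rfl
        _ ≤ ∑ _z ∈ s, (Cc + 1) := by
            refine Finset.sum_le_sum fun z _ => ?_
            have h1 : (insert z (nbr_finite hc z).toFinset).card ≤
                (nbr_finite hc z).toFinset.card + 1 := Finset.card_insert_le _ _
            have h2 : ((nbr_finite hc z).toFinset.card : ℝ) ≤ Cc :=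
              card_le_of_adj hc z _ (fun y hy => by simpa using hy)
            calc ((insert z (nbr_finite hc z).toFinset).card : ℝ)
                ≤ ((nbr_finite hc z).toFinset.card : ℝ) + 1 := by exact_mod_cast h1
              _ ≤ Cc + 1 := by linarith
        _ = (s.card : ℝ) * (Cc + 1) := by rw [Finset.sum_const, nsmul_eq_mul]
        _ ≤ (Cc + 1) ^ n * (Cc + 1) := by
            exact mul_le_mul_of_nonneg_right hcard (by linarith)
        _ = (Cc + 1) ^ (n + 1) := by rw [pow_succ]

lemma wV_le_mul_of_adj (hc : Γ.Controlled Cc) {x y : V} (h : Γ.G.Adj x y) :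
    Γ.wV x ≤ Cc * Γ.wV y := by
  have hCc : 0 < Cc := lt_trans one_pos hc.1
  refine (hc.2 x y h).trans (mul_le_mul_of_nonneg_left ?_ hCc.le)
  rw [Γ.wE_symm]; exact wE_le_wV Γ y x

lemma wV_le_pow_walk (hc : Γ.Controlled Cc) :
    ∀ {x y : V} (p : Γ.G.Walk x y), Γ.wV x ≤ Cc ^ p.length * Γ.wV y := by
  have hCc : 0 < Cc := lt_trans one_pos hc.1
  intro x y p
  induction p with
  | nil => simp
  | @cons x b y h q ih =>
    calc Γ.wV x ≤ Cc * Γ.wV b := wV_le_mul_of_adj hc h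
      _ ≤ Cc * (Cc ^ q.length * Γ.wV y) := mul_le_mul_of_nonneg_left ih hCc.le
      _ = Cc ^ (SimpleGraph.Walk.cons h q).length * Γ.wV y := by
          rw [SimpleGraph.Walk.length_cons, pow_succ]; ring

lemma wV_le_pow_dist (hc : Γ.Controlled Cc) {x y : V} {n : ℕ} (h : Γ.G.dist x y ≤ n) :
    Γ.wV x ≤ Cc ^ n * Γ.wV y := by
  obtain ⟨p, hp⟩ := (Γ.connected.preconnected x y).exists_walk_length_eq_dist
  have h1 := wV_le_pow_walk hc p
  rw [hp] at h1
  refine h1.trans (mul_le_mul_of_nonneg_right (pow_le_pow_right₀ hc.1.le h) (Γ.wV_pos y).le)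


lemma key_pointwise (hc : Γ.Controlled Cc) (f : V → ℝ) (u x y : V) (M : ℕ)
    (hx : Γ.G.dist u x ≤ M) (hy : Γ.G.dist u y ≤ M) (A : Finset V)
    (hA : ∀ z, Γ.G.dist u z ≤ 3 * M → z ∈ A) :
    (f x - f y) ^ 2 * Γ.wV u ≤
      (2 * (M : ℝ)) ^ 2 * Cc ^ (3 * M + 1) *
        ∑ p ∈ A ×ˢ A, (f p.1 - f p.2) ^ 2 * Γ.wE p.1 p.2 := by
  classical
  have hCc : 0 < Cc := lt_trans one_pos hc.1
  set S := ∑ p ∈ A ×ˢ A, (f p.1 - f p.2) ^ 2 * Γ.wE p.1 p.2 with hS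
  have hSnn : 0 ≤ S :=
    Finset.sum_nonneg fun p _ => mul_nonneg (sq_nonneg _) (Γ.wE_nonneg _ _)
  obtain ⟨p, hp⟩ := (Γ.connected.preconnected x y).exists_walk_length_eq_dist
  have hdxy : Γ.G.dist x y ≤ 2 * M := by
    calc Γ.G.dist x y ≤ Γ.G.dist x u + Γ.G.dist u y := Γ.connected.dist_triangle
      _ ≤ M + M := by rw [SimpleGraph.dist_comm]; exact add_le_add hx hy
      _ = 2 * M := by ring
  have hn : p.length ≤ 2 * M := by rw [hp]; exact hdxy
  set n := p.length with hnn
  have hgz : ∀ i, i ≤ n → Γ.G.dist u (p.getVert i) ≤ 3 * M := by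
    intro i hi
    calc Γ.G.dist u (p.getVert i) ≤ Γ.G.dist u x + Γ.G.dist x (p.getVert i) :=
        Γ.connected.dist_triangle
      _ ≤ M + i := add_le_add hx (dist_getVert_le Γ.connected p i)
      _ ≤ 3 * M := by omega
  have htel : f x - f y = ∑ i ∈ Finset.range n, (f (p.getVert i) - f (p.getVert (i + 1))) := by
    rw [Finset.sum_range_sub' (fun i => f (p.getVert i))]
    rw [p.getVert_zero, hnn, p.getVert_length]
  have hsq : (f x - f y) ^ 2 ≤
      (n : ℝ) * ∑ i ∈ Finset.range n, (f (p.getVert i) - f (p.getVert (i + 1))) ^ 2 := by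
    rw [htel]
    have := sq_sum_le_card_mul_sum_sq
      (s := Finset.range n) (f := fun i => f (p.getVert i) - f (p.getVert (i + 1)))
    simpa [Finset.card_range] using this
  have hterm : ∀ i ∈ Finset.range n,
      (f (p.getVert i) - f (p.getVert (i + 1))) ^ 2 * Γ.wV u ≤ Cc ^ (3 * M + 1) * S := by
    intro i hi
    rw [Finset.mem_range] at hi
    have hadj := p.adj_getVert_succ hi
    have h1 : Γ.wV u ≤ Cc ^ (3 * M + 1) * Γ.wE (p.getVert i) (p.getVert (i + 1)) := by
      calc Γ.wV u ≤ Cc ^ (3 * M) * Γ.wV (p.getVert i) :=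
          wV_le_pow_dist hc (hgz i hi.le)
        _ ≤ Cc ^ (3 * M) * (Cc * Γ.wE (p.getVert i) (p.getVert (i + 1))) :=
          mul_le_mul_of_nonneg_left (hc.2 _ _ hadj) (pow_nonneg hCc.le _)
        _ = Cc ^ (3 * M + 1) * Γ.wE (p.getVert i) (p.getVert (i + 1)) := by
          rw [pow_succ]; ring
    have h2 : (f (p.getVert i) - f (p.getVert (i + 1))) ^ 2 *
        Γ.wE (p.getVert i) (p.getVert (i + 1)) ≤ S := by
      have hmem : (p.getVert i, p.getVert (i + 1)) ∈ A ×ˢ A :=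
        Finset.mem_product.2 ⟨hA _ (hgz i hi.le), hA _ (hgz (i + 1) (by omega))⟩
      exact Finset.single_le_sum (f := fun q : V × V => (f q.1 - f q.2) ^ 2 * Γ.wE q.1 q.2)
        (fun q _ => mul_nonneg (sq_nonneg _) (Γ.wE_nonneg _ _)) hmem
    calc (f (p.getVert i) - f (p.getVert (i + 1))) ^ 2 * Γ.wV u
        ≤ (f (p.getVert i) - f (p.getVert (i + 1))) ^ 2 *
          (Cc ^ (3 * M + 1) * Γ.wE (p.getVert i) (p.getVert (i + 1))) :=
          mul_le_mul_of_nonneg_left h1 (sq_nonneg _)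
      _ = Cc ^ (3 * M + 1) * ((f (p.getVert i) - f (p.getVert (i + 1))) ^ 2 *
          Γ.wE (p.getVert i) (p.getVert (i + 1))) := by ring
      _ ≤ Cc ^ (3 * M + 1) * S := mul_le_mul_of_nonneg_left h2 (pow_nonneg hCc.le _)
  have hnR : (n : ℝ) ≤ 2 * (M : ℝ) := by exact_mod_cast hn
  have hnnR : (0 : ℝ) ≤ (n : ℝ) := Nat.cast_nonneg n
  calc (f x - f y) ^ 2 * Γ.wV u
      ≤ ((n : ℝ) * ∑ i ∈ Finset.range n, (f (p.getVert i) - f (p.getVert (i + 1))) ^ 2) *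
        Γ.wV u := mul_le_mul_of_nonneg_right hsq (Γ.wV_pos u).le
    _ = (n : ℝ) * ∑ i ∈ Finset.range n,
        (f (p.getVert i) - f (p.getVert (i + 1))) ^ 2 * Γ.wV u := by
        rw [mul_assoc, Finset.sum_mul]
    _ ≤ (n : ℝ) * ∑ _i ∈ Finset.range n, Cc ^ (3 * M + 1) * S :=
        mul_le_mul_of_nonneg_left (Finset.sum_le_sum hterm) hnnR
    _ = (n : ℝ) * ((n : ℝ) * (Cc ^ (3 * M + 1) * S)) := by
        rw [Finset.sum_const, nsmul_eq_mul, Finset.card_range]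
    _ ≤ (2 * (M : ℝ)) * ((2 * (M : ℝ)) * (Cc ^ (3 * M + 1) * S)) := by
        have hX : 0 ≤ Cc ^ (3 * M + 1) * S := mul_nonneg (pow_nonneg hCc.le _) hSnn
        gcongr
    _ = (2 * (M : ℝ)) ^ 2 * Cc ^ (3 * M + 1) * S := by ring

lemma ball_finite (hc : Γ.Controlled Cc) (w : V) {r : ℝ} : (Γ.ball w r).Finite := by
  obtain ⟨s, hs, -⟩ := ball_cover hc ⌈r⌉₊ w
  refine Set.Finite.subset s.finite_toSet fun z hz => ?_
  refine hs z ?_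
  have h1 : (Γ.G.dist w z : ℝ) ≤ (⌈r⌉₊ : ℝ) := le_trans hz (Nat.le_ceil r)
  exact_mod_cast h1

lemma mem_ball_dist {w z : V} {r : ℝ} (h : z ∈ Γ.ball w r) : Γ.G.dist w z ≤ ⌈r⌉₊ := by
  have h1 : (Γ.G.dist w z : ℝ) ≤ (⌈r⌉₊ : ℝ) := le_trans h (Nat.le_ceil r)
  exact_mod_cast h1

lemma avg_diff (hc : Γ.Controlled Cc) (f : V → ℝ) {ε : ℝ} (hε : 0 < ε)
    (u v : V) (k : ℕ) (hd : Γ.G.dist u v ≤ k) (A : Finset V)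
    (hA : ∀ z, Γ.G.dist u z ≤ 3 * (2 * ⌈ε⌉₊ + k) → z ∈ A) :
    (Γ.avg ε f u - Γ.avg ε f v) ^ 2 * Γ.wV u ≤
      (2 * ((2 * ⌈ε⌉₊ + k : ℕ) : ℝ)) ^ 2 * Cc ^ (3 * (2 * ⌈ε⌉₊ + k) + 1) *
        ∑ p ∈ A ×ˢ A, (f p.1 - f p.2) ^ 2 * Γ.wE p.1 p.2 := by
  classical
  set m := ⌈ε⌉₊ with hm
  set M := 2 * m + k with hM
  set S := ∑ p ∈ A ×ˢ A, (f p.1 - f p.2) ^ 2 * Γ.wE p.1 p.2 with hS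
  set Ckp := (2 * (M : ℝ)) ^ 2 * Cc ^ (3 * M + 1) with hCkp
  have hFu := ball_finite (Γ := Γ) hc u (r := ε)
  have hFv := ball_finite (Γ := Γ) hc v (r := ε)
  set Fu := hFu.toFinset with hFudef
  set Fv := hFv.toFinset with hFvdef
  set Su := ∑ x ∈ Fu, f x * Γ.wV x with hSu
  set Sv := ∑ x ∈ Fv, f x * Γ.wV x with hSv
  set Vu := ∑ x ∈ Fu, Γ.wV x with hVu
  set Vv := ∑ x ∈ Fv, Γ.wV x with hVv
  have hmemu : u ∈ Fu := by
    rw [hFudef, Set.Finite.mem_toFinset]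
    show (Γ.G.dist u u : ℝ) ≤ ε
    rw [SimpleGraph.dist_self]
    simpa using hε.le
  have hmemv : v ∈ Fv := by
    rw [hFvdef, Set.Finite.mem_toFinset]
    show (Γ.G.dist v v : ℝ) ≤ ε
    rw [SimpleGraph.dist_self]
    simpa using hε.le
  have hVupos : 0 < Vu := Finset.sum_pos (fun x _ => Γ.wV_pos x) ⟨u, hmemu⟩
  have hVvpos : 0 < Vv := Finset.sum_pos (fun x _ => Γ.wV_pos x) ⟨v, hmemv⟩
  have havgu : Γ.avg ε f u = Su / Vu := by
    rw [avg, vol, setSum_finite hFu, setSum_finite hFu]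
  have havgv : Γ.avg ε f v = Sv / Vv := by
    rw [avg, vol, setSum_finite hFv, setSum_finite hFv]
  -- distances
  have hdistx : ∀ x ∈ Fu, Γ.G.dist u x ≤ M := by
    intro x hx
    rw [hFudef, Set.Finite.mem_toFinset] at hx
    have := mem_ball_dist (Γ := Γ) hx
    omega
  have hdisty : ∀ y ∈ Fv, Γ.G.dist u y ≤ M := by
    intro y hy
    rw [hFvdef, Set.Finite.mem_toFinset] at hy
    have h1 := mem_ball_dist (Γ := Γ) hy
    have h2 : Γ.G.dist u y ≤ Γ.G.dist u v + Γ.G.dist v y := Γ.connected.dist_triangle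
    omega
  -- numerator
  set Num := ∑ p ∈ Fu ×ˢ Fv, (f p.1 - f p.2) * (Γ.wV p.1 * Γ.wV p.2) with hNum
  have hdiff : Γ.avg ε f u - Γ.avg ε f v = Num / (Vu * Vv) := by
    rw [havgu, havgv, div_sub_div _ _ hVupos.ne' hVvpos.ne']
    congr 1
    rw [hNum, Finset.sum_product]
    rw [hSu, hSv, hVu, hVv, Finset.sum_mul_sum, Finset.sum_mul_sum]
    rw [← Finset.sum_sub_distrib]
    refine Finset.sum_congr rfl fun x _ => ?_
    rw [← Finset.sum_sub_distrib]
    exact Finset.sum_congr rfl fun y _ => by ring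
  set Q := ∑ p ∈ Fu ×ˢ Fv, (f p.1 - f p.2) ^ 2 * (Γ.wV p.1 * Γ.wV p.2) with hQ
  have hP : ∑ p ∈ Fu ×ˢ Fv, Γ.wV p.1 * Γ.wV p.2 = Vu * Vv := by
    rw [Finset.sum_product, hVu, hVv, Finset.sum_mul_sum]
  have hCS : Num ^ 2 ≤ (Vu * Vv) * Q := by
    rw [← hP]
    refine Finset.sum_sq_le_sum_mul_sum_of_sq_eq_mul (Fu ×ˢ Fv)
      (f := fun p => Γ.wV p.1 * Γ.wV p.2)
      (g := fun p => (f p.1 - f p.2) ^ 2 * (Γ.wV p.1 * Γ.wV p.2)) ?_ ?_ ?_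
    · exact fun p _ => mul_nonneg (Γ.wV_pos _).le (Γ.wV_pos _).le
    · exact fun p _ => mul_nonneg (sq_nonneg _) (mul_nonneg (Γ.wV_pos _).le (Γ.wV_pos _).le)
    · exact fun p _ => by ring
  have hQW : Q * Γ.wV u ≤ (Ckp * S) * (Vu * Vv) := by
    rw [← hP, Finset.sum_mul, Finset.mul_sum]
    refine Finset.sum_le_sum fun p hp => ?_
    rw [Finset.mem_product] at hp
    have hkp := key_pointwise hc f u p.1 p.2 M (hdistx _ hp.1) (hdisty _ hp.2) A hA
    calc (f p.1 - f p.2) ^ 2 * (Γ.wV p.1 * Γ.wV p.2) * Γ.wV u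
        = ((f p.1 - f p.2) ^ 2 * Γ.wV u) * (Γ.wV p.1 * Γ.wV p.2) := by ring
      _ ≤ (Ckp * S) * (Γ.wV p.1 * Γ.wV p.2) := by
          refine mul_le_mul_of_nonneg_right ?_
            (mul_nonneg (Γ.wV_pos _).le (Γ.wV_pos _).le)
          rw [hCkp, hS]
          exact hkp
  -- combine
  have hPpos : 0 < Vu * Vv := mul_pos hVupos hVvpos
  rw [hdiff, div_pow, div_mul_eq_mul_div, div_le_iff₀ (by positivity)]
  calc Num ^ 2 * Γ.wV u ≤ ((Vu * Vv) * Q) * Γ.wV u :=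
      mul_le_mul_of_nonneg_right hCS (Γ.wV_pos u).le
    _ = (Vu * Vv) * (Q * Γ.wV u) := by ring
    _ ≤ (Vu * Vv) * ((Ckp * S) * (Vu * Vv)) := mul_le_mul_of_nonneg_left hQW hPpos.le
    _ = Ckp * S * (Vu * Vv) ^ 2 := by ring


end WeightedGraph

namespace WeightedGraph

variable {V₁ V₂ : Type*} {Γ₁ : WeightedGraph V₁} {Γ₂ : WeightedGraph V₂}
  {Φ : V₁ → V₂} {ε a b Cq : ℝ}

lemma qi_dist_bound (hΦ : IsQI Γ₁ Γ₂ Φ ε a b Cq) (R : ℕ) {z : V₂} {α₀ α : V₁}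
    (h₀ : Γ₂.G.dist (Φ α₀) z ≤ R) (h : Γ₂.G.dist (Φ α) z ≤ R) :
    Γ₁.G.dist α₀ α ≤ ⌈a * (2 * (R : ℝ) + b)⌉₊ := by
  have ha := hΦ.a_pos
  have h2 : (Γ₂.G.dist (Φ α₀) (Φ α) : ℝ) ≤ 2 * (R : ℝ) := by
    have htri : Γ₂.G.dist (Φ α₀) (Φ α) ≤
        Γ₂.G.dist (Φ α₀) z + Γ₂.G.dist z (Φ α) := Γ₂.connected.dist_triangle
    have hcomm : Γ₂.G.dist z (Φ α) = Γ₂.G.dist (Φ α) z := SimpleGraph.dist_comm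
    have hnat : Γ₂.G.dist (Φ α₀) (Φ α) ≤ 2 * R := by omega
    exact_mod_cast hnat
  have h3 := hΦ.dist_lower α₀ α
  have h4 : a⁻¹ * (Γ₁.G.dist α₀ α : ℝ) ≤ 2 * (R : ℝ) + b := by linarith
  have h5 : (Γ₁.G.dist α₀ α : ℝ) ≤ a * (2 * (R : ℝ) + b) := by
    have h6 := mul_le_mul_of_nonneg_left h4 ha.le
    rwa [← mul_assoc, mul_inv_cancel₀ ha.ne', one_mul] at h6
  have h7 : (Γ₁.G.dist α₀ α : ℝ) ≤ (⌈a * (2 * (R : ℝ) + b)⌉₊ : ℝ) := h5.trans (Nat.le_ceil _)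
  exact_mod_cast h7

lemma preimage_ball_finite {Cc₁ : ℝ} (hc₁ : Γ₁.Controlled Cc₁)
    (hΦ : IsQI Γ₁ Γ₂ Φ ε a b Cq) (R : ℕ) (z : V₂) :
    {α | Γ₂.G.dist (Φ α) z ≤ R}.Finite := by
  rcases Set.eq_empty_or_nonempty {α | Γ₂.G.dist (Φ α) z ≤ R} with he | ⟨α₀, hα₀⟩
  · rw [he]; exact Set.finite_empty
  · obtain ⟨s, hs, -⟩ := ball_cover hc₁ ⌈a * (2 * (R : ℝ) + b)⌉₊ α₀
    exact Set.Finite.subset s.finite_toSet fun α hα => hs α (qi_dist_bound hΦ R hα₀ hα)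

open Classical in
lemma preimage_filter_card {Cc₁ : ℝ} (hc₁ : Γ₁.Controlled Cc₁)
    (hΦ : IsQI Γ₁ Γ₂ Φ ε a b Cq) (R : ℕ) (z : V₂) (T : Finset V₁) :
    (((T.filter fun α => Γ₂.G.dist (Φ α) z ≤ R).card : ℝ)) ≤
      (Cc₁ + 1) ^ ⌈a * (2 * (R : ℝ) + b)⌉₊ := by
  have hCc₁ : (0:ℝ) < Cc₁ + 1 := by linarith [hc₁.1]
  rcases (T.filter fun α => Γ₂.G.dist (Φ α) z ≤ R).eq_empty_or_nonempty with he | ⟨α₀, hα₀⟩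
  · rw [he]
    simpa using pow_nonneg hCc₁.le _
  · rw [Finset.mem_filter] at hα₀
    obtain ⟨s, hs, hcard⟩ := ball_cover hc₁ ⌈a * (2 * (R : ℝ) + b)⌉₊ α₀
    have hsub : (T.filter fun α => Γ₂.G.dist (Φ α) z ≤ R) ⊆ s := by
      intro α hα
      rw [Finset.mem_filter] at hα
      exact hs α (qi_dist_bound hΦ R hα₀.2 hα.2)
    calc (((T.filter fun α => Γ₂.G.dist (Φ α) z ≤ R).card : ℝ))
        ≤ (s.card : ℝ) := by exact_mod_cast Finset.card_le_card hsub
      _ ≤ _ := hcard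

lemma two_mul_energy {V : Type*} (Γ : WeightedGraph V) (f : V → ℝ) :
    2 * Γ.energy f = ∑' x, ∑' y, (f x - f y) ^ 2 * Γ.wE x y := by
  rw [energy]; ring

end WeightedGraph

open WeightedGraph in
/-- **Claim (Dirichlet form comparison under a quasi-isometry).**
Let `Φ : Γ₁ → Γ₂` be a quasi-isometry between connected weighted graphs with controlled
and uniformly lazy weights.  Then there is a constant `C_A` such that for every finitely
supported `f : Γ₂ → ℝ`, the Dirichlet energy of `f_ε ∘ Φ` on `Γ₁` is at most `C_A`
times the Dirichlet energy of `f` on `Γ₂`. -/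
theorem dirichlet_form_comparison {V₁ V₂ : Type*}
    (Γ₁ : WeightedGraph V₁) (Γ₂ : WeightedGraph V₂)
    (Cc₁ Ce₁ Cc₂ Ce₂ : ℝ)
    (h₁c : Γ₁.Controlled Cc₁) (h₁e : Γ₁.UniformlyLazy Ce₁)
    (h₂c : Γ₂.Controlled Cc₂) (h₂e : Γ₂.UniformlyLazy Ce₂)
    (Φ : V₁ → V₂) (ε a b Cq : ℝ) (hΦ : IsQI Γ₁ Γ₂ Φ ε a b Cq) :
    ∃ CA : ℝ, 0 < CA ∧ ∀ f : V₂ → ℝ, (Function.support f).Finite →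
      Γ₁.energy (fun x => Γ₂.avg ε f (Φ x)) ≤ CA * Γ₂.energy f := by
  classical
  have hCc₁pos : (0:ℝ) < Cc₁ := lt_trans one_pos h₁c.1
  have hCc₂pos : (0:ℝ) < Cc₂ := lt_trans one_pos h₂c.1
  have hε := hΦ.eps_pos
  have ha := hΦ.a_pos
  have hCq := hΦ.Cq_pos
  set m := ⌈ε⌉₊ with hm
  set k := ⌈a⌉₊ with hk
  set M := 2 * m + k with hM
  set R := 3 * M with hR
  set L := ⌈a * (2 * (R : ℝ) + b)⌉₊ with hL
  set Ckp := (2 * (M : ℝ)) ^ 2 * Cc₂ ^ (3 * M + 1) with hCkp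
  set Nm := (Cc₁ + 1) ^ L with hNm
  have hmpos : 0 < m := Nat.ceil_pos.mpr hε
  have hMpos : 0 < M := by omega
  have hMR : (0:ℝ) < (M : ℝ) := by exact_mod_cast hMpos
  have hCkppos : 0 < Ckp := by rw [hCkp]; positivity
  have hNmpos : 0 < Nm := pow_pos (by linarith) L
  refine ⟨Cc₁ * Cq * Ckp * Nm,
    mul_pos (mul_pos (mul_pos hCc₁pos hCq) hCkppos) hNmpos, ?_⟩
  intro f hf
  have hennneg : ∀ x y : V₂, 0 ≤ (f x - f y) ^ 2 * Γ₂.wE x y :=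
    fun x y => mul_nonneg (sq_nonneg _) (Γ₂.wE_nonneg x y)
  -- finite balls of radius R in Γ₂
  have hBfin : ∀ u : V₂, {z | Γ₂.G.dist u z ≤ R}.Finite := by
    intro u
    obtain ⟨s, hs, -⟩ := ball_cover h₂c R u
    exact Set.Finite.subset s.finite_toSet (fun z hz => hs z hz)
  set Bf : V₂ → Finset V₂ := fun u => (hBfin u).toFinset with hBf
  have hBfmem : ∀ u z, z ∈ Bf u ↔ Γ₂.G.dist u z ≤ R := by
    intro u z
    rw [hBf]
    simp [Set.Finite.mem_toFinset]
  set Stot : V₂ → ℝ := fun u => ∑ p ∈ Bf u ×ˢ Bf u, (f p.1 - f p.2) ^ 2 * Γ₂.wE p.1 p.2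
    with hStot
  have hStotnn : ∀ u, 0 ≤ Stot u := by
    intro u
    rw [hStot]
    exact Finset.sum_nonneg fun p _ => hennneg _ _
  -- RHS : any finite partial sum is at most twice the energy
  have hN₂ : ∀ x : V₂, {y | Γ₂.G.Adj x y}.Finite := fun x => nbr_finite h₂c x
  have hesumm : ∀ x, Summable (fun y => (f x - f y) ^ 2 * Γ₂.wE x y) := by
    intro x
    refine summable_of_ne_finset_zero (s := (hN₂ x).toFinset) fun y hy => ?_
    have hna : ¬ Γ₂.G.Adj x y := by simpa using hy
    rw [Γ₂.wE_eq_zero hna, mul_zero]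
  set Wf := hf.toFinset with hWf
  set W' := Wf ∪ Wf.biUnion (fun s => (hN₂ s).toFinset) with hW'
  have houter0 : ∀ x, x ∉ W' → ∀ y, (f x - f y) ^ 2 * Γ₂.wE x y = 0 := by
    intro x hx y
    by_contra hxy
    have hfx : f x = 0 := by
      by_contra hfx
      refine hx (Finset.mem_union_left _ ?_)
      rw [hWf, Set.Finite.mem_toFinset]
      exact hfx
    have hwE : Γ₂.wE x y ≠ 0 := fun h0 => hxy (by rw [h0, mul_zero])
    have hadj : Γ₂.G.Adj x y := adj_of_wE_ne Γ₂ hwE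
    have hfy : f y ≠ 0 := by
      intro h0
      exact hxy (by rw [hfx, h0, sub_zero]; ring)
    have hyW : y ∈ Wf := by rw [hWf, Set.Finite.mem_toFinset]; exact hfy
    refine hx (Finset.mem_union_right _ (Finset.mem_biUnion.2 ⟨y, hyW, ?_⟩))
    rw [Set.Finite.mem_toFinset]
    exact hadj.symm
  have hosum : Summable (fun x => ∑' y, (f x - f y) ^ 2 * Γ₂.wE x y) := by
    refine summable_of_ne_finset_zero (s := W') fun x hx => ?_
    rw [tsum_congr (houter0 x hx), tsum_zero]
  have hRHS : ∀ U : Finset (V₂ × V₂),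
      (∑ p ∈ U, (f p.1 - f p.2) ^ 2 * Γ₂.wE p.1 p.2) ≤ 2 * Γ₂.energy f := by
    intro U
    rw [two_mul_energy]
    set A := U.image Prod.fst with hA
    set B := U.image Prod.snd with hB
    have hUsub : U ⊆ A ×ˢ B := fun p hp => Finset.mem_product.2
      ⟨Finset.mem_image_of_mem _ hp, Finset.mem_image_of_mem _ hp⟩
    calc ∑ p ∈ U, (f p.1 - f p.2) ^ 2 * Γ₂.wE p.1 p.2
        ≤ ∑ p ∈ A ×ˢ B, (f p.1 - f p.2) ^ 2 * Γ₂.wE p.1 p.2 :=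
        Finset.sum_le_sum_of_subset_of_nonneg hUsub (fun p _ _ => hennneg _ _)
      _ = ∑ x ∈ A, ∑ y ∈ B, (f x - f y) ^ 2 * Γ₂.wE x y := by rw [Finset.sum_product]
      _ ≤ ∑ x ∈ A, ∑' y, (f x - f y) ^ 2 * Γ₂.wE x y := Finset.sum_le_sum (fun x _ =>
          Summable.sum_le_tsum B (fun y _ => hennneg x y) (hesumm x))
      _ ≤ ∑' x, ∑' y, (f x - f y) ^ 2 * Γ₂.wE x y :=
          Summable.sum_le_tsum A (fun x _ => tsum_nonneg (fun y => hennneg x y)) hosum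
  -- LHS
  set g : V₁ → ℝ := fun α => Γ₂.avg ε f (Φ α) with hg
  have htnn : ∀ α β : V₁, 0 ≤ (g α - g β) ^ 2 * Γ₁.wE α β :=
    fun α β => mul_nonneg (sq_nonneg _) (Γ₁.wE_nonneg _ _)
  -- the support of g is finite
  have hSfin : {α | g α ≠ 0}.Finite := by
    have hsub : {α | g α ≠ 0} ⊆ ⋃ s ∈ (Wf : Set V₂), {α | Γ₂.G.dist (Φ α) s ≤ m} := by
      intro α hα
      by_contra hαn
      simp only [Set.mem_iUnion, Set.mem_setOf_eq, not_exists] at hαn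
      apply hα
      show g α = 0
      have hzero : ∀ y ∈ Γ₂.ball (Φ α) ε, f y = 0 := by
        intro y hy
        by_contra hfy
        have hyW : y ∈ (Wf : Set V₂) := by
          rw [Finset.mem_coe, hWf, Set.Finite.mem_toFinset]
          exact hfy
        exact hαn y hyW (mem_ball_dist (Γ := Γ₂) hy)
      rw [hg]
      show Γ₂.avg ε f (Φ α) = 0
      rw [avg]
      have hnum : setSum (Γ₂.ball (Φ α) ε) (fun y => f y * Γ₂.wV y) = 0 := by
        rw [setSum]
        have hz : ∀ (y : (Γ₂.ball (Φ α) ε : Set V₂)), f (y : V₂) * Γ₂.wV (y : V₂) = 0 :=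
          fun y => by rw [hzero (y : V₂) y.2, zero_mul]
        rw [tsum_congr hz, tsum_zero]
      rw [hnum, zero_div]
    refine Set.Finite.subset (Set.Finite.biUnion Wf.finite_toSet ?_) hsub
    intro s _
    exact preimage_ball_finite h₁c hΦ m s
  set Sf := hSfin.toFinset with hSf
  have hN₁ : ∀ β : V₁, {γ | Γ₁.G.Adj β γ}.Finite := fun β => nbr_finite h₁c β
  set T := Sf ∪ Sf.biUnion (fun β => (hN₁ β).toFinset) with hT
  have hinner : ∀ α, (∑' β, (g α - g β) ^ 2 * Γ₁.wE α β) =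
      ∑ β ∈ (hN₁ α).toFinset, (g α - g β) ^ 2 * Γ₁.wE α β := by
    intro α
    refine tsum_eq_sum (fun β hβ => ?_)
    have hna : ¬ Γ₁.G.Adj α β := by simpa using hβ
    rw [Γ₁.wE_eq_zero hna, mul_zero]
  have houterT : ∀ α, α ∉ T → (∑' β, (g α - g β) ^ 2 * Γ₁.wE α β) = 0 := by
    intro α hα
    have hgα : g α = 0 := by
      by_contra h0
      refine hα (Finset.mem_union_left _ ?_)
      rw [hSf, Set.Finite.mem_toFinset]
      exact h0
    have hz : ∀ β, (g α - g β) ^ 2 * Γ₁.wE α β = 0 := by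
      intro β
      by_contra h0
      have hwE : Γ₁.wE α β ≠ 0 := fun hw => h0 (by rw [hw, mul_zero])
      have hadj : Γ₁.G.Adj α β := adj_of_wE_ne Γ₁ hwE
      have hgβ : g β ≠ 0 := by
        intro hb
        exact h0 (by rw [hgα, hb, sub_zero]; ring)
      have hβS : β ∈ Sf := by rw [hSf, Set.Finite.mem_toFinset]; exact hgβ
      refine hα (Finset.mem_union_right _ (Finset.mem_biUnion.2 ⟨β, hβS, ?_⟩))
      rw [Set.Finite.mem_toFinset]
      exact hadj.symm
    rw [tsum_congr hz, tsum_zero]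
  have hEg : Γ₁.energy g =
      (∑ α ∈ T, ∑ β ∈ (hN₁ α).toFinset, (g α - g β) ^ 2 * Γ₁.wE α β) / 2 := by
    rw [energy]
    congr 1
    rw [tsum_eq_sum (s := T) houterT]
    exact Finset.sum_congr rfl fun α _ => hinner α
  -- per-term bound
  have hterm : ∀ α : V₁, ∀ β ∈ (hN₁ α).toFinset,
      (g α - g β) ^ 2 * Γ₁.wE α β ≤ Cq * (Ckp * Stot (Φ α)) := by
    intro α β hβ
    have hadj : Γ₁.G.Adj α β := by simpa using hβ
    have hd2 : Γ₂.G.dist (Φ α) (Φ β) ≤ k := by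
      have h1 := hΦ.dist_upper α β
      have hd1n : Γ₁.G.dist α β ≤ 1 := by
        simpa using SimpleGraph.dist_le (SimpleGraph.Walk.cons hadj SimpleGraph.Walk.nil)
      have hd1 : (Γ₁.G.dist α β : ℝ) ≤ 1 := by exact_mod_cast hd1n
      have h2 : (Γ₂.G.dist (Φ α) (Φ β) : ℝ) ≤ a := by
        calc (Γ₂.G.dist (Φ α) (Φ β) : ℝ) ≤ a * (Γ₁.G.dist α β : ℝ) := h1
          _ ≤ a * 1 := mul_le_mul_of_nonneg_left hd1 ha.le
          _ = a := mul_one a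
      have h3 : (Γ₂.G.dist (Φ α) (Φ β) : ℝ) ≤ (k : ℝ) := h2.trans (Nat.le_ceil a)
      exact_mod_cast h3
    have hAball : ∀ z, Γ₂.G.dist (Φ α) z ≤ 3 * (2 * ⌈ε⌉₊ + k) → z ∈ Bf (Φ α) := by
      intro z hz
      refine (hBfmem _ z).2 ?_
      omega
    have havg := avg_diff h₂c f hε (Φ α) (Φ β) k hd2 (Bf (Φ α)) hAball
    rw [← hm, ← hM] at havg
    have havg' : (g α - g β) ^ 2 * Γ₂.wV (Φ α) ≤ Ckp * Stot (Φ α) := by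
      rw [hg, hCkp, hStot]
      calc (Γ₂.avg ε f (Φ α) - Γ₂.avg ε f (Φ β)) ^ 2 * Γ₂.wV (Φ α)
          ≤ (2 * (M : ℝ)) ^ 2 * Cc₂ ^ (3 * M + 1) *
            ∑ p ∈ Bf (Φ α) ×ˢ Bf (Φ α), (f p.1 - f p.2) ^ 2 * Γ₂.wE p.1 p.2 := havg
        _ = _ := by rw [mul_assoc]
    have hw1 : Γ₁.wE α β ≤ Γ₁.wV α := wE_le_wV Γ₁ α β
    have hw2 : Γ₁.wV α ≤ Cq * Γ₂.wV (Φ α) := by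
      have h5 := hΦ.weight_lower α
      have h6 := mul_le_mul_of_nonneg_left h5 hCq.le
      rwa [← mul_assoc, mul_inv_cancel₀ hCq.ne', one_mul] at h6
    calc (g α - g β) ^ 2 * Γ₁.wE α β
        ≤ (g α - g β) ^ 2 * (Cq * Γ₂.wV (Φ α)) :=
          mul_le_mul_of_nonneg_left (hw1.trans hw2) (sq_nonneg _)
      _ = Cq * ((g α - g β) ^ 2 * Γ₂.wV (Φ α)) := by ring
      _ ≤ Cq * (Ckp * Stot (Φ α)) := mul_le_mul_of_nonneg_left havg' hCq.le
  -- sum over neighbours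
  have hrow : ∀ α : V₁, ∑ β ∈ (hN₁ α).toFinset, (g α - g β) ^ 2 * Γ₁.wE α β ≤
      Cc₁ * (Cq * (Ckp * Stot (Φ α))) := by
    intro α
    have h1 : ∑ β ∈ (hN₁ α).toFinset, (g α - g β) ^ 2 * Γ₁.wE α β ≤
        (hN₁ α).toFinset.card • (Cq * (Ckp * Stot (Φ α))) :=
      Finset.sum_le_card_nsmul _ _ _ (fun β hβ => hterm α β hβ)
    rw [nsmul_eq_mul] at h1
    refine h1.trans (mul_le_mul_of_nonneg_right ?_ ?_)
    · exact card_le_of_adj h₁c α _ (fun y hy => by simpa using hy)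
    · exact mul_nonneg hCq.le (mul_nonneg hCkppos.le (hStotnn _))
  -- multiplicity bound
  have hmult : ∑ α ∈ T, Stot (Φ α) ≤ Nm * (2 * Γ₂.energy f) := by
    set U := T.biUnion (fun α => Bf (Φ α) ×ˢ Bf (Φ α)) with hU
    have hsubP : ∀ α ∈ T, Bf (Φ α) ×ˢ Bf (Φ α) ⊆ U := by
      intro α hα
      rw [hU]
      exact Finset.subset_biUnion_of_mem (fun α => Bf (Φ α) ×ˢ Bf (Φ α)) hα
    have step1 : ∑ α ∈ T, Stot (Φ α) =
        ∑ p ∈ U, ∑ α ∈ T,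
          (if p ∈ Bf (Φ α) ×ˢ Bf (Φ α) then (f p.1 - f p.2) ^ 2 * Γ₂.wE p.1 p.2 else 0) := by
      rw [Finset.sum_comm]
      refine Finset.sum_congr rfl fun α hα => ?_
      rw [Finset.sum_ite_mem, Finset.inter_eq_right.mpr (hsubP α hα), hStot]
    rw [step1]
    have step2 : ∀ p : V₂ × V₂,
        (∑ α ∈ T,
          (if p ∈ Bf (Φ α) ×ˢ Bf (Φ α) then (f p.1 - f p.2) ^ 2 * Γ₂.wE p.1 p.2 else 0)) ≤
        Nm * ((f p.1 - f p.2) ^ 2 * Γ₂.wE p.1 p.2) := by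
      intro p
      rw [← Finset.sum_filter, Finset.sum_const, nsmul_eq_mul]
      refine mul_le_mul_of_nonneg_right ?_ (hennneg _ _)
      have hs1 : T.filter (fun α => p ∈ Bf (Φ α) ×ˢ Bf (Φ α)) ⊆
          T.filter (fun α => Γ₂.G.dist (Φ α) p.1 ≤ R) := by
        intro α hα
        rw [Finset.mem_filter] at hα ⊢
        refine ⟨hα.1, ?_⟩
        exact (hBfmem _ p.1).1 (Finset.mem_product.1 hα.2).1
      calc ((T.filter (fun α => p ∈ Bf (Φ α) ×ˢ Bf (Φ α))).card : ℝ)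
          ≤ ((T.filter (fun α => Γ₂.G.dist (Φ α) p.1 ≤ R)).card : ℝ) := by
            exact_mod_cast Finset.card_le_card hs1
        _ ≤ (Cc₁ + 1) ^ ⌈a * (2 * (R : ℝ) + b)⌉₊ := preimage_filter_card h₁c hΦ R p.1 T
        _ = Nm := by rw [hNm, hL]
    calc (∑ p ∈ U, ∑ α ∈ T,
          (if p ∈ Bf (Φ α) ×ˢ Bf (Φ α) then (f p.1 - f p.2) ^ 2 * Γ₂.wE p.1 p.2 else 0))
        ≤ ∑ p ∈ U, Nm * ((f p.1 - f p.2) ^ 2 * Γ₂.wE p.1 p.2) :=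
          Finset.sum_le_sum (fun p _ => step2 p)
      _ = Nm * ∑ p ∈ U, (f p.1 - f p.2) ^ 2 * Γ₂.wE p.1 p.2 := by rw [Finset.mul_sum]
      _ ≤ Nm * (2 * Γ₂.energy f) := mul_le_mul_of_nonneg_left (hRHS U) hNmpos.le
  -- finish
  have hfinal : ∑ α ∈ T, ∑ β ∈ (hN₁ α).toFinset, (g α - g β) ^ 2 * Γ₁.wE α β ≤
      Cc₁ * Cq * Ckp * (Nm * (2 * Γ₂.energy f)) := by
    calc ∑ α ∈ T, ∑ β ∈ (hN₁ α).toFinset, (g α - g β) ^ 2 * Γ₁.wE α β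
        ≤ ∑ α ∈ T, Cc₁ * (Cq * (Ckp * Stot (Φ α))) := Finset.sum_le_sum (fun α _ => hrow α)
      _ = Cc₁ * Cq * Ckp * ∑ α ∈ T, Stot (Φ α) := by
          rw [Finset.mul_sum]
          exact Finset.sum_congr rfl fun α _ => by ring
      _ ≤ Cc₁ * Cq * Ckp * (Nm * (2 * Γ₂.energy f)) := by
          refine mul_le_mul_of_nonneg_left hmult ?_
          exact mul_nonneg (mul_nonneg hCc₁pos.le hCq.le) hCkppos.le
  rw [hEg]
  have hrearr : Cc₁ * Cq * Ckp * (Nm * (2 * Γ₂.energy f)) =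
      2 * (Cc₁ * Cq * Ckp * Nm * Γ₂.energy f) := by ring
  linarith [hfinal, hrearr]
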